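/- Let t₁ ≥ t₂ ≥ ... ≥ t_{2M} be nonnegative reals. Among all partitions of {1,...,2M} into M unordered pairs, the partition {(1,2M), (2,2M−1), ..., (M,M+1)} maximizes the minimum over pairs (i,j) of log₂(1 + t_i + t_j). -/

import Mathlib

/-! Order users by index, so a larger index means a weaker user, and fix the pair `(k, 2M-1-k)` of
the sorted pairing. In any pairing `σ`, users of index `< k` sit at exactly `k` positions and users
of index `< 2M-1-k` at exactly `2M-1-k`. So at most `2M-1` positions `j` have a partner `j.rev`
of index `< k` or hold themselves a user of index `< 2M-1-k`, and some pair `{j.rev, j}` of `σ`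
consists of users at least as weak as `k` and `2M-1-k`. Every pair rate of the sorted pairing
therefore dominates some pair rate of `σ`. -/

open Finset

lemma Equiv.Perm.card_filter_val_lt {n : ℕ} (σ : Equiv.Perm (Fin n)) {m : ℕ} (hm : m ≤ n) :
    #{j | (σ j : ℕ) < m} = m := by
  rw [card_equiv σ (t := ({i | (i : ℕ) < m} : Finset (Fin n))) (by simp),
    Fin.card_filter_val_lt, min_eq_right hm]

lemma Equiv.Perm.exists_le_apply_rev_and_le_apply {n : ℕ} (σ : Equiv.Perm (Fin n)) {k : ℕ}
    (hk : k < n) : ∃ j, k ≤ (σ j.rev : ℕ) ∧ n - 1 - k ≤ (σ j : ℕ) := by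
  set A : Finset (Fin n) := {j | (σ j.rev : ℕ) < k}
  set B : Finset (Fin n) := {j | (σ j : ℕ) < n - 1 - k}
  have hA : #A = k := Equiv.Perm.card_filter_val_lt (Fin.revPerm.trans σ) hk.le
  have hB : #B = n - 1 - k := σ.card_filter_val_lt (by omega)
  have hcard : #(A ∪ B) < #(univ : Finset (Fin n)) := by
    grw [card_union_le, hA, hB, card_univ, Fintype.card_fin]
    omega
  obtain ⟨j, -, hj⟩ := exists_mem_notMem_of_card_lt_card hcard
  simp only [mem_union, A, B, mem_filter, mem_univ, true_and, not_or, not_lt] at hj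
  exact ⟨j, hj⟩

lemma Fin.exists_add_eq_add_rev {α : Type*} [AddCommMagma α] {M : ℕ} (f : Fin (2 * M) → α)
    (j : Fin (2 * M)) :
    ∃ m : Fin M, f ⟨m, by omega⟩ + f ⟨2 * M - 1 - m, by omega⟩ = f j + f j.rev := by
  by_cases hj : (j : ℕ) < M
  · refine ⟨⟨j, hj⟩, ?_⟩
    congr 2
    ext; simp; omega
  · refine ⟨⟨2 * M - 1 - j, by omega⟩, ?_⟩
    rw [add_comm]
    congr 2 <;> ext <;> simp <;> omega

/-- For sorted nonnegative SNRs, the strongest-with-weakest pairing also maximizes the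
minimum pair rate `min over pairs of log₂(1+t_i+t_j)` over all partitions of the `2M`
users into `M` pairs (pairings represented by permutations as in the sum-rate case). -/
theorem stmt_2 (M : ℕ) (hM : 0 < M) (t : Fin (2 * M) → ℝ) (ht0 : ∀ i, 0 ≤ t i)
    (hsort : ∀ i j : Fin (2 * M), i ≤ j → t j ≤ t i)
    (σ : Equiv.Perm (Fin (2 * M))) :
    ⨅ m : Fin M, Real.logb 2
        (1 + t (σ ⟨m, by have := m.isLt; omega⟩) + t (σ ⟨2 * M - 1 - m, by have := m.isLt; omega⟩))
      ≤ ⨅ m : Fin M, Real.logb 2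
        (1 + t ⟨m, by have := m.isLt; omega⟩ + t ⟨2 * M - 1 - m, by have := m.isLt; omega⟩) := by
  have : Nonempty (Fin M) := ⟨⟨0, hM⟩⟩
  refine ciInf_mono_of_forall_exists (Set.finite_range _).bddBelow fun k ↦ ?_
  obtain ⟨j, hlo, hhi⟩ := σ.exists_le_apply_rev_and_le_apply (k := k) (by omega)
  obtain ⟨m, hm⟩ := Fin.exists_add_eq_add_rev (t ∘ σ) j
  refine ⟨m, Real.logb_le_logb_of_le one_lt_two ?_ ?_⟩
  · linarith [ht0 (σ ⟨m, by omega⟩), ht0 (σ ⟨2 * M - 1 - m, by omega⟩)]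
  · have hj := hsort ⟨2 * M - 1 - k, by omega⟩ (σ j) hhi
    have hj_rev := hsort ⟨k, by omega⟩ (σ j.rev) hlo
    simp only [Function.comp_apply] at hm
    linarith
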